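/- For an odd positive integer h and every real t ≠ 0, (sinh(t/2)/(t/2))^{-1}·(sinh(h t/2)/(h t/2)) = 1/h + ∑_{m=0}^∞ [ (1/(h·2^{2m-1}·(2m)!))·(∑_{l even, 2 ≤ l ≤ h-1} l^{2m}) ] · t^{2m}, where the inner sum runs over l = 2, 4, …, h-1. -/

import Mathlib

/-! Telescoping `sinh((l+1)x) - sinh((l-1)x) = 2 sinh x cosh(l x)` over even `l` gives
`sinh(h x) / sinh x = 1 + 2 ∑_{l even, 2 ≤ l ≤ h-1} cosh(l x)` for odd `h`; expanding each
`cosh (l t / 2)` in its power series and summing the finitely many series termwise yields the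
expansion, the factor `2 / 2 ^ (2m)` being the `1 / 2 ^ (2m-1)` of the statement. -/

open Finset

lemma Real.sinh_two_mul_add_one_mul (k : ℕ) (x : ℝ) :
    Real.sinh ((2 * k + 1) * x) =
      Real.sinh x * (1 + 2 * ∑ j ∈ range k, Real.cosh (((2 * (j + 1) : ℕ) : ℝ) * x)) := by
  induction k with
  | zero => simp
  | succ k ih =>
    have step : Real.sinh ((2 * (k + 1 : ℕ) + 1) * x) - Real.sinh ((2 * k + 1) * x) =
        2 * Real.sinh x * Real.cosh (((2 * (k + 1) : ℕ) : ℝ) * x) := by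
      have hsub : (2 * k + 1) * x = ((2 * (k + 1) : ℕ) : ℝ) * x - x := by push_cast; ring
      have hadd : (2 * (k + 1 : ℕ) + 1) * x = ((2 * (k + 1) : ℕ) : ℝ) * x + x := by
        push_cast; ring
      rw [hsub, hadd, Real.sinh_add, Real.sinh_sub]
      ring
    rw [sum_range_succ]
    linear_combination ih + step

lemma hasSum_sum_pow_two_mul_div_factorial {ι : Type*} (s : Finset ι) (a : ι → ℝ) :
    HasSum (fun m ↦ (∑ i ∈ s, a i ^ (2 * m)) / (2 * m).factorial)
      (∑ i ∈ s, Real.cosh (a i)) := by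
  simp_rw [sum_div]
  exact hasSum_sum fun i _ ↦ Real.hasSum_cosh (a i)

lemma Real.sinh_two_mul_add_one_mul_div (k : ℕ) {x : ℝ} (hx : x ≠ 0) :
    (Real.sinh x / x)⁻¹ * (Real.sinh ((2 * k + 1) * x) / ((2 * k + 1) * x)) =
      (1 + 2 * ∑ j ∈ range k, Real.cosh (((2 * (j + 1) : ℕ) : ℝ) * x)) / (2 * k + 1) := by
  have hsinh : Real.sinh x ≠ 0 := Real.sinh_ne_zero.mpr hx
  have hk : (2 * k + 1 : ℝ) ≠ 0 := by positivity
  rw [Real.sinh_two_mul_add_one_mul]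
  field_simp

lemma hasSum_two_div_mul_sum_cosh_mul_half {ι : Type*} (s : Finset ι) (l : ι → ℝ) (c t : ℝ) :
    HasSum (fun m : ℕ ↦ 1 / (c * (2 : ℝ) ^ (2 * (m : ℤ) - 1) * (2 * m).factorial) *
        (∑ i ∈ s, l i ^ (2 * m)) * t ^ (2 * m))
      (2 / c * ∑ i ∈ s, Real.cosh (l i * (t / 2))) := by
  have hterm (m : ℕ) : 1 / (c * (2 : ℝ) ^ (2 * (m : ℤ) - 1) * (2 * m).factorial) *
      (∑ i ∈ s, l i ^ (2 * m)) * t ^ (2 * m) =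
      2 / c * ((∑ i ∈ s, (l i * (t / 2)) ^ (2 * m)) / (2 * m).factorial) := by
    have hzpow : (2 : ℝ) ^ (2 * (m : ℤ) - 1) = 2 ^ (2 * m) / 2 := by
      rw [zpow_sub₀ two_ne_zero, zpow_one, ← zpow_natCast]
      push_cast; rfl
    simp_rw [hzpow, mul_pow, ← sum_mul, div_pow]
    field_simp
  simpa only [hterm] using (hasSum_sum_pow_two_mul_div_factorial s (l · * (t / 2))).mul_left (2 / c)

theorem sinh_ratio_odd_expansion_general (h : ℕ) (hodd : Odd h)
    (t : ℝ) (ht : t ≠ 0) :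
    (Real.sinh (t / 2) / (t / 2))⁻¹ * (Real.sinh (h * t / 2) / (h * t / 2)) =
      1 / (h : ℝ) +
      ∑' m : ℕ, (1 / ((h : ℝ) * (2 : ℝ) ^ (2 * (m : ℤ) - 1) * (Nat.factorial (2 * m)))) *
        (∑ j ∈ Finset.range ((h - 1) / 2), ((2 * (j + 1) : ℕ) : ℝ) ^ (2 * m)) * t ^ (2 * m) := by
  obtain ⟨k, rfl⟩ := hodd
  have hk : (2 * k + 1 - 1) / 2 = k := by omega
  have hh : ((2 * k + 1 : ℕ) : ℝ) = 2 * k + 1 := by push_cast; ring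
  rw [hk, hh, mul_div_assoc,
    Real.sinh_two_mul_add_one_mul_div k (div_ne_zero ht two_ne_zero),
    (hasSum_two_div_mul_sum_cosh_mul_half _ _ _ t).tsum_eq]
  ring

theorem sinh_ratio_odd_expansion (h : ℕ) (hpos : 0 < h) (hodd : Odd h)
    (t : ℝ) (ht : t ≠ 0) :
    (Real.sinh (t / 2) / (t / 2))⁻¹ * (Real.sinh (h * t / 2) / (h * t / 2)) =
      1 / (h : ℝ) +
      ∑' m : ℕ, (1 / ((h : ℝ) * (2 : ℝ) ^ (2 * (m : ℤ) - 1) * (Nat.factorial (2 * m)))) *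
        (∑ j ∈ Finset.range ((h - 1) / 2), ((2 * (j + 1) : ℕ) : ℝ) ^ (2 * m)) * t ^ (2 * m) :=
  sinh_ratio_odd_expansion_general h hodd t ht
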